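/- Let A be a self-adjoint operator on a Hilbert space H and φ, ψ unit vectors belonging to D(A^k) for some k ∈ ℕ. Then the rank-one operator |ψ⟩⟨φ| is of class C^k with respect to A, and ad_A^k(|ψ⟩⟨φ|) = ∑_{p=0}^{k} (−1)^{k−p} (k choose p) |A^p ψ⟩⟨A^{k−p} φ|. -/

import Mathlib

/-
For `x, y ∈ D(A)` the symmetry of `A` gives `ad_A |y⟩⟨x| = |A y⟩⟨x| - |y⟩⟨A x|`, and `ad_A` is
linear. Applied termwise to the `j`-th sum this produces a combination of rank-one operators
`|A^{p+1} ψ⟩⟨A^{j-p} φ|` and `|A^p ψ⟩⟨A^{j-p+1} φ|`, which Pascal's rule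
`C(j+1, p) = C(j, p) + C(j, p-1)` regroups into the `(j+1)`-th sum.
-/

open scoped InnerProductSpace
open Complex

noncomputable section

/-- The `n`-th Fourier coefficient of a `2π`-periodic function `f : ℝ → ℂ`. -/
def fcoef (f : ℝ → ℂ) (n : ℤ) : ℂ :=
  (1 / (2 * Real.pi)) • ∫ θ in (0:ℝ)..(2 * Real.pi), Complex.exp (-Complex.I * n * θ) * f θ

variable {E : Type*} [NormedAddCommGroup E] [InnerProductSpace ℂ E] [CompleteSpace E]

/-- `e` is the canonical orthonormal (Hilbert) basis of `ℓ²(ℕ)`, abstractly: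
an orthonormal family with dense span. -/
def IsONBasis (e : ℕ → E) : Prop :=
  Orthonormal ℂ e ∧ (Submodule.span ℂ (Set.range e)).topologicalClosure = ⊤

/-- `T` is the Toeplitz operator with symbol `f`: `⟪e n, T (e k)⟫ = f̂(n−k)`. -/
def IsToeplitz (e : ℕ → E) (f : ℝ → ℂ) (T : E →L[ℂ] E) : Prop :=
  ∀ n k : ℕ, ⟪e n, T (e k)⟫_ℂ = fcoef f ((n : ℤ) - k)

/-- `T` is the Hankel operator with symbol `f`: `⟪e n, T (e k)⟫ = f̂(n+k+1)`
(0-based indexing of the paper's `f̂_{n+k-1}`, `n, k ≥ 1`). -/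
def IsHankel (e : ℕ → E) (f : ℝ → ℂ) (T : E →L[ℂ] E) : Prop :=
  ∀ n k : ℕ, ⟪e n, T (e k)⟫_ℂ = fcoef f ((n : ℤ) + k + 1)

/-- `X` is the (self-adjoint) position operator: `X e_n = (n+1) e_n` (0-based). -/
def IsPosOp (e : ℕ → E) (X : E →ₗ.[ℂ] E) : Prop :=
  X.adjoint = X ∧ ∀ q : ℕ, ∃ hq : e q ∈ X.domain, X ⟨e q, hq⟩ = ((q : ℂ) + 1) • e q

/-- `A` is the self-adjoint operator `A_g`, the closure of `½(T_g X + X T_g)`;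
being essentially self-adjoint, it is the unique self-adjoint operator with
matrix elements `((p+q+2)/2)·ĝ(p−q)` on the canonical basis (0-based). -/
def IsAg (e : ℕ → E) (g : ℝ → ℂ) (A : E →ₗ.[ℂ] E) : Prop :=
  A.adjoint = A ∧ ∀ q : ℕ, ∃ hq : e q ∈ A.domain, ∀ p : ℕ,
    ⟪e p, A ⟨e q, hq⟩⟫_ℂ = (((p : ℂ) + q + 2) / 2) * fcoef g ((p : ℤ) - q)

/-- `C = ad_A B`: the commutator form of `A` and `B` on `D(A) × D(A)` is
represented by the bounded operator `C`; in particular `B ∈ C¹(A)`. -/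
def CommutatorOf (A : E →ₗ.[ℂ] E) (B C : E →L[ℂ] E) : Prop :=
  ∀ φ ψ : A.domain, ⟪A φ, B (ψ : E)⟫_ℂ - ⟪(φ : E), B (A ψ)⟫_ℂ = ⟪(φ : E), C (ψ : E)⟫_ℂ

/-- `∑_{p=0}^{j} (−1)^{j−p} C(j,p) |A^p ψ⟩⟨A^{j−p} φ|`, where `φs p = A^p φ`,
`ψs p = A^p ψ`; `(innerSL ℂ v).smulRight w` is `|w⟩⟨v| : x ↦ ⟨v,x⟩ w`. -/
def rankSum (φs ψs : ℕ → E) (j : ℕ) : E →L[ℂ] E :=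
  ∑ p ∈ Finset.range (j + 1),
    (((-1 : ℂ)) ^ (j - p) * (Nat.choose j p : ℂ)) •
      ((innerSL ℂ (φs (j - p))).smulRight (ψs p))

end

variable {E : Type*} [NormedAddCommGroup E] [InnerProductSpace ℂ E]

open InnerProductSpace

theorem IsSelfAdjoint.isFormalAdjoint_self [CompleteSpace E] {A : E →ₗ.[ℂ] E}
    (hA : IsSelfAdjoint A) : A.IsFormalAdjoint A := by
  have h := LinearPMap.adjoint_isFormalAdjoint hA.dense_domain
  rwa [LinearPMap.isSelfAdjoint_def.mp hA] at h

namespace CommutatorOf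

variable {A : E →ₗ.[ℂ] E}

theorem const_smul {B C : E →L[ℂ] E} (h : CommutatorOf A B C) (c : ℂ) :
    CommutatorOf A (c • B) (c • C) := by
  intro φ ψ
  simp only [smul_apply, inner_smul_right, ← mul_sub, h φ ψ]

theorem sum {ι : Type*} (s : Finset ι) {B C : ι → E →L[ℂ] E}
    (h : ∀ i ∈ s, CommutatorOf A (B i) (C i)) :
    CommutatorOf A (∑ i ∈ s, B i) (∑ i ∈ s, C i) := by
  intro φ ψ
  simp only [sum_apply, inner_sum, ← Finset.sum_sub_distrib]
  exact Finset.sum_congr rfl fun i hi => h i hi φ ψ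

end CommutatorOf

theorem commutatorOf_rankOne {A : E →ₗ.[ℂ] E} (hA : A.IsFormalAdjoint A) {x x' y y' : E}
    (hx : ∃ h : x ∈ A.domain, A ⟨x, h⟩ = x') (hy : ∃ h : y ∈ A.domain, A ⟨y, h⟩ = y') :
    CommutatorOf A (rankOne ℂ y x) (rankOne ℂ y' x - rankOne ℂ y x') := by
  obtain ⟨hx, rfl⟩ := hx
  obtain ⟨hy, rfl⟩ := hy
  intro φ ψ
  have hφy : ⟪A φ, y⟫_ℂ = ⟪(φ : E), A ⟨y, hy⟩⟫_ℂ := hA φ ⟨y, hy⟩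
  have hxψ : ⟪x, A ψ⟫_ℂ = ⟪A ⟨x, hx⟩, (ψ : E)⟫_ℂ := (hA ⟨x, hx⟩ ψ).symm
  simp only [sub_apply, rankOne_apply, inner_smul_right, inner_sub_right, hφy, hxψ]

theorem rankSum_succ (φs ψs : ℕ → E) (j : ℕ) :
    rankSum φs ψs (j + 1) = ∑ p ∈ Finset.range (j + 1), ((-1 : ℂ) ^ (j - p) * (j.choose p : ℂ)) •
      (rankOne ℂ (ψs (p + 1)) (φs (j - p)) - rankOne ℂ (ψs p) (φs (j - p + 1))) := by
  have pascal := Finset.sum_choose_succ_nsmul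
    (fun p q => (-1 : ℂ) ^ q • rankOne ℂ (ψs p) (φs q)) j
  simp only [rankSum, mul_comm _ (Nat.cast _ : ℂ), mul_smul, Nat.cast_smul_eq_nsmul, ← rankOne_def]
  rw [pascal, add_comm, ← Finset.sum_add_distrib]
  refine Finset.sum_congr rfl fun p hp => ?_
  rw [show j + 1 - p = j - p + 1 by have := Finset.mem_range.mp hp; omega, pow_succ]
  module

variable [CompleteSpace E]

theorem stmt_16 (A : E →ₗ.[ℂ] E) (hAsa : A.adjoint = A)
    (k : ℕ) (φs ψs : ℕ → E)
    (hφs : ∀ j < k, ∃ h : φs j ∈ A.domain, A ⟨φs j, h⟩ = φs (j + 1))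
    (hψs : ∀ j < k, ∃ h : ψs j ∈ A.domain, A ⟨ψs j, h⟩ = ψs (j + 1)) :
    ∀ j < k, CommutatorOf A (rankSum φs ψs j) (rankSum φs ψs (j + 1)) := by
  intro j hj
  have hA : A.IsFormalAdjoint A := IsSelfAdjoint.isFormalAdjoint_self hAsa
  rw [rankSum_succ]
  refine CommutatorOf.sum _ fun p hp => (commutatorOf_rankOne hA ?_ ?_).const_smul _
  · exact hφs (j - p) (by omega)
  · exact hψs p ((Finset.mem_range_succ_iff.mp hp).trans_lt hj)
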